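/- Let H be a weak Hopf algebra over a field k with quasitriangular structure (R, R̄), and let (Θ, Θ̄) be a twist for H with twisted comultiplication Δ_Θ(h) = Θ̄Δ(h)Θ. Then (R_Θ, R̄_Θ) := (Θ̄₂₁RΘ, Θ̄R̄Θ₂₁) is a quasitriangular structure on the twisted weak Hopf algebra H_Θ; explicitly: R_Θ = Δ_Θᵒᵖ(1)R_ΘΔ_Θ(1), R̄_Θ = Δ_Θ(1)R̄_ΘΔ_Θᵒᵖ(1), R_ΘR̄_Θ = Δ_Θᵒᵖ(1), R̄_ΘR_Θ = Δ_Θ(1), Δ_Θᵒᵖ(h)R_Θ = R_ΘΔ_Θ(h) for all h ∈ H, (id⊗Δ_Θ)R_Θ = (R_Θ)₁₃(R_Θ)₁₂, and (Δ_Θ⊗id)R_Θ = (R_Θ)₁₃(R_Θ)₂₃. -/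

import Mathlib

open TensorProduct

noncomputable section

namespace WHA

variable (k B : Type*) [Field k] [Ring B] [Algebra k B]

/-- `x ↦ x ⊗ 1`, the embedding of `B ⊗ B` into legs 1,2 of `B ⊗ B ⊗ B`. -/
def leg12 : B ⊗[k] B →ₗ[k] B ⊗[k] (B ⊗[k] B) :=
  (TensorProduct.assoc k B B B).toLinearMap ∘ₗ (TensorProduct.mk k (B ⊗[k] B) B).flip 1

/-- `x ↦ 1 ⊗ x`, the embedding of `B ⊗ B` into legs 2,3 of `B ⊗ B ⊗ B`. -/
def leg23 : B ⊗[k] B →ₗ[k] B ⊗[k] (B ⊗[k] B) :=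
  TensorProduct.mk k B (B ⊗[k] B) 1

/-- `a ⊗ b ↦ a ⊗ 1 ⊗ b`, the embedding of `B ⊗ B` into legs 1,3 of `B ⊗ B ⊗ B`. -/
def leg13 : B ⊗[k] B →ₗ[k] B ⊗[k] (B ⊗[k] B) :=
  TensorProduct.map LinearMap.id (TensorProduct.mk k B B 1)

/-- `Δ ⊗ id`, landing in the right-associated triple tensor product. -/
def ext12 (Δ : B →ₗ[k] B ⊗[k] B) : B ⊗[k] B →ₗ[k] B ⊗[k] (B ⊗[k] B) :=
  (TensorProduct.assoc k B B B).toLinearMap ∘ₗ TensorProduct.map Δ LinearMap.id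

/-- `id ⊗ Δ`. -/
def ext23 (Δ : B →ₗ[k] B ⊗[k] B) : B ⊗[k] B →ₗ[k] B ⊗[k] (B ⊗[k] B) :=
  TensorProduct.map LinearMap.id Δ

/-- `(ε ⊗ id)` composed with the canonical isomorphism `k ⊗ B ≅ B`. -/
def epsL (ε : B →ₗ[k] k) : B ⊗[k] B →ₗ[k] B :=
  (TensorProduct.lid k B).toLinearMap ∘ₗ TensorProduct.map ε LinearMap.id

/-- `(id ⊗ ε)` composed with the canonical isomorphism `B ⊗ k ≅ B`. -/
def epsR (ε : B →ₗ[k] k) : B ⊗[k] B →ₗ[k] B :=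
  (TensorProduct.rid k B).toLinearMap ∘ₗ TensorProduct.map LinearMap.id ε

/-- Pairing of two linear functionals against an element of `B ⊗ B`. -/
def pairF (φ ψ : B →ₗ[k] k) : B ⊗[k] B →ₗ[k] k :=
  (TensorProduct.lid k k).toLinearMap ∘ₗ TensorProduct.map φ ψ

/-- The multiplication map `B ⊗ B → B`. -/
def mul2 : B ⊗[k] B →ₗ[k] B := LinearMap.mul' k B

/-- A weak Hopf algebra structure on the `k`-algebra `B`. -/
structure WeakHopf where
  Δ : B →ₗ[k] B ⊗[k] B
  ε : B →ₗ[k] k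
  S : B →ₗ[k] B
  comul_mul : ∀ g h : B, Δ (g * h) = Δ g * Δ h
  coassoc : ∀ h : B, ext12 k B Δ (Δ h) = ext23 k B Δ (Δ h)
  counit_left : ∀ h : B, epsL k B ε (Δ h) = h
  counit_right : ∀ h : B, epsR k B ε (Δ h) = h
  eps_weak₁ : ∀ g h f : B, ε (g * h * f) =
    pairF k B (ε ∘ₗ LinearMap.mulLeft k g) (ε ∘ₗ LinearMap.mulRight k f) (Δ h)
  eps_weak₂ : ∀ g h f : B, ε (g * h * f) =
    pairF k B (ε ∘ₗ LinearMap.mulRight k f) (ε ∘ₗ LinearMap.mulLeft k g) (Δ h)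
  delta_one₁ : ext12 k B Δ (Δ 1) = leg12 k B (Δ 1) * leg23 k B (Δ 1)
  delta_one₂ : ext12 k B Δ (Δ 1) = leg23 k B (Δ 1) * leg12 k B (Δ 1)
  antipode₁ : ∀ h : B,
    mul2 k B (TensorProduct.map LinearMap.id S (Δ h)) = epsL k B ε (Δ 1 * (h ⊗ₜ[k] 1))
  antipode₂ : ∀ h : B,
    mul2 k B (TensorProduct.map S LinearMap.id (Δ h)) = epsR k B ε (((1 : B) ⊗ₜ[k] h) * Δ 1)
  antipode₃ : ∀ h : B,
    mul2 k B (TensorProduct.map S (mul2 k B ∘ₗ TensorProduct.map LinearMap.id S)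
      (ext23 k B Δ (Δ h))) = S h

variable {k B}

/-- The target counital map `ε_t`. -/
def WeakHopf.εt (W : WeakHopf k B) : B →ₗ[k] B :=
  epsL k B W.ε ∘ₗ LinearMap.mulLeft k (W.Δ 1) ∘ₗ (TensorProduct.mk k B B).flip 1

/-- The source counital map `ε_s`. -/
def WeakHopf.εs (W : WeakHopf k B) : B →ₗ[k] B :=
  epsR k B W.ε ∘ₗ LinearMap.mulRight k (W.Δ 1) ∘ₗ TensorProduct.mk k B B 1

variable (k B)

/-- A twist for a weak Hopf algebra. -/
structure Twist (W : WeakHopf k B) where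
  Θ : B ⊗[k] B
  Θbar : B ⊗[k] B
  idem_left : Θ = W.Δ 1 * Θ
  idem_right : Θbar = Θbar * W.Δ 1
  prod_eq : Θ * Θbar = W.Δ 1
  counit₁ : epsL k B W.ε Θ = 1
  counit₂ : epsR k B W.ε Θ = 1
  counit₃ : epsL k B W.ε Θbar = 1
  counit₄ : epsR k B W.ε Θbar = 1
  cocycle₁ : ext12 k B W.Δ Θ * leg12 k B Θ = ext23 k B W.Δ Θ * leg23 k B Θ
  cocycle₂ : leg12 k B Θbar * ext12 k B W.Δ Θbar = leg23 k B Θbar * ext23 k B W.Δ Θbar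
  cocycle₃ : ext12 k B W.Δ Θbar * ext23 k B W.Δ Θ = leg12 k B Θ * leg23 k B Θbar
  cocycle₄ : ext23 k B W.Δ Θbar * ext12 k B W.Δ Θ = leg23 k B Θ * leg12 k B Θbar

end WHA

/-!
Each axiom for `R_Θ = Θ̄₂₁ R Θ` comes from the corresponding one for `R` by conjugation. The
algebraic ones only need `ΘΘ̄ = Δ(1)`, `Δ(1)Θ = Θ` and `Δᵒᵖ(1) R = R = R Δ(1)`. For
`(id ⊗ Δ_Θ) R_Θ`, the cocycle identity of `Θ` trades `(id ⊗ Δ)Θ Θ₂₃` for `(Δ ⊗ id)Θ Θ₁₂`, which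
`R₁₂` carries to `(Δᵒᵖ ⊗ id)Θ R₁₂`; the cocycle identities of `Θ̄`, read with the tensor legs
permuted, then regroup the factors as `(R_Θ)₁₃ (R_Θ)₁₂`. The axiom for `(Δ_Θ ⊗ id) R_Θ` is the
mirror image.
-/

namespace WHA

variable {k B : Type*} [Field k] [Ring B] [Algebra k B]

theorem mul_mul_eq_of_mul_eq {M : Type*} [Semigroup M] {a b c d : M} (h : a * b = c * d)
    (x : M) : a * (b * x) = c * (d * x) := by
  rw [← mul_assoc, h, mul_assoc]

theorem comm_mul (x y : B ⊗[k] B) :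
    TensorProduct.comm k B B (x * y) = TensorProduct.comm k B B x * TensorProduct.comm k B B y :=
  map_mul (Algebra.TensorProduct.comm k B B) x y

theorem assoc_mul (x y : (B ⊗[k] B) ⊗[k] B) :
    TensorProduct.assoc k B B B (x * y) =
      TensorProduct.assoc k B B B x * TensorProduct.assoc k B B B y :=
  map_mul (Algebra.TensorProduct.assoc k k k B B B) x y

def comulOp (Δ : B →ₗ[k] B ⊗[k] B) : B →ₗ[k] B ⊗[k] B :=
  (TensorProduct.comm k B B).toLinearMap ∘ₗ Δ

@[simp] theorem comulOp_apply (Δ : B →ₗ[k] B ⊗[k] B) (b : B) :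
    comulOp Δ b = TensorProduct.comm k B B (Δ b) := rfl

section Legs

theorem leg12_apply (X : B ⊗[k] B) : leg12 k B X = TensorProduct.assoc k B B B (X ⊗ₜ 1) := rfl

@[simp] theorem leg12_tmul (a b : B) : leg12 k B (a ⊗ₜ b) = a ⊗ₜ (b ⊗ₜ (1 : B)) := rfl

@[simp] theorem leg23_apply (X : B ⊗[k] B) : leg23 k B X = (1 : B) ⊗ₜ X := rfl

@[simp] theorem leg13_tmul (a b : B) : leg13 k B (a ⊗ₜ b) = a ⊗ₜ ((1 : B) ⊗ₜ b) := rfl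

theorem ext12_tmul (Δ : B →ₗ[k] B ⊗[k] B) (a b : B) :
    ext12 k B Δ (a ⊗ₜ b) = TensorProduct.assoc k B B B (Δ a ⊗ₜ b) := rfl

@[simp] theorem ext23_tmul (Δ : B →ₗ[k] B ⊗[k] B) (a b : B) :
    ext23 k B Δ (a ⊗ₜ b) = a ⊗ₜ Δ b := rfl

theorem leg12_mul (x y : B ⊗[k] B) : leg12 k B (x * y) = leg12 k B x * leg12 k B y :=
  LinearMap.map_mul_of_map_mul_tmul (fun _ _ _ _ => by simp) x y

theorem leg23_mul (x y : B ⊗[k] B) : leg23 k B (x * y) = leg23 k B x * leg23 k B y := by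
  simp

theorem leg13_mul (x y : B ⊗[k] B) : leg13 k B (x * y) = leg13 k B x * leg13 k B y :=
  LinearMap.map_mul_of_map_mul_tmul (fun _ _ _ _ => by simp) x y

variable {Δ Δ' : B →ₗ[k] B ⊗[k] B}

theorem ext12_mul (hΔ : ∀ g h : B, Δ (g * h) = Δ g * Δ h) (x y : B ⊗[k] B) :
    ext12 k B Δ (x * y) = ext12 k B Δ x * ext12 k B Δ y :=
  LinearMap.map_mul_of_map_mul_tmul (fun _ _ _ _ => by
    simp only [ext12_tmul, hΔ, ← assoc_mul, Algebra.TensorProduct.tmul_mul_tmul]) x y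

theorem ext23_mul (hΔ : ∀ g h : B, Δ (g * h) = Δ g * Δ h) (x y : B ⊗[k] B) :
    ext23 k B Δ (x * y) = ext23 k B Δ x * ext23 k B Δ y :=
  LinearMap.map_mul_of_map_mul_tmul (fun _ _ _ _ => by simp [hΔ]) x y

theorem ext12_eq_of_forall_eq_mul_mul {X Y : B ⊗[k] B} (h : ∀ b, Δ' b = X * Δ b * Y)
    (x : B ⊗[k] B) :
    ext12 k B Δ' x = leg12 k B X * ext12 k B Δ x * leg12 k B Y := by
  induction x using TensorProduct.induction_on with
  | zero => simp
  | tmul a b =>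
    rw [ext12_tmul, ext12_tmul, leg12_apply, leg12_apply, ← assoc_mul, ← assoc_mul,
      Algebra.TensorProduct.tmul_mul_tmul, Algebra.TensorProduct.tmul_mul_tmul, one_mul, mul_one,
      h]
  | add x y hx hy => simp only [map_add, hx, hy, mul_add, add_mul]

theorem ext23_eq_of_forall_eq_mul_mul {X Y : B ⊗[k] B} (h : ∀ b, Δ' b = X * Δ b * Y)
    (x : B ⊗[k] B) :
    ext23 k B Δ' x = leg23 k B X * ext23 k B Δ x * leg23 k B Y := by
  induction x using TensorProduct.induction_on with
  | zero => simp
  | tmul a b => simp [h]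
  | add x y hx hy => simp only [map_add, hx, hy, mul_add, add_mul]

theorem leg12_mul_ext12 {R : B ⊗[k] B}
    (hR : ∀ h, TensorProduct.comm k B B (Δ h) * R = R * Δ h) (x : B ⊗[k] B) :
    leg12 k B R * ext12 k B Δ x = ext12 k B (comulOp Δ) x * leg12 k B R := by
  induction x using TensorProduct.induction_on with
  | zero => simp
  | tmul a b =>
    rw [ext12_tmul, ext12_tmul, leg12_apply, ← assoc_mul, ← assoc_mul,
      Algebra.TensorProduct.tmul_mul_tmul, Algebra.TensorProduct.tmul_mul_tmul, one_mul, mul_one,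
      comulOp_apply, hR]
  | add x y hx hy => simp only [map_add, hx, hy, mul_add, add_mul]

theorem ext23_comulOp_mul_leg23 {R : B ⊗[k] B}
    (hR : ∀ h, TensorProduct.comm k B B (Δ h) * R = R * Δ h) (x : B ⊗[k] B) :
    ext23 k B (comulOp Δ) x * leg23 k B R = leg23 k B R * ext23 k B Δ x := by
  induction x using TensorProduct.induction_on with
  | zero => simp
  | tmul a b => simp [hR]
  | add x y hx hy => simp only [map_add, hx, hy, mul_add, add_mul]

end Legs

section Swaps

def swap12 : B ⊗[k] (B ⊗[k] B) ≃ₐ[k] B ⊗[k] (B ⊗[k] B) :=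
  Algebra.TensorProduct.leftComm k B B B

def swap23 : B ⊗[k] (B ⊗[k] B) ≃ₐ[k] B ⊗[k] (B ⊗[k] B) :=
  Algebra.TensorProduct.congr AlgEquiv.refl (Algebra.TensorProduct.comm k B B)

@[simp] theorem swap12_tmul (a b c : B) :
    swap12 (a ⊗ₜ[k] (b ⊗ₜ[k] c)) = b ⊗ₜ (a ⊗ₜ c) := rfl

@[simp] theorem swap23_tmul (a : B) (X : B ⊗[k] B) :
    swap23 (a ⊗ₜ X) = a ⊗ₜ TensorProduct.comm k B B X := rfl

theorem swap12_leg12 (X : B ⊗[k] B) :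
    swap12 (leg12 k B X) = leg12 k B (TensorProduct.comm k B B X) := by
  induction X using TensorProduct.induction_on <;> simp_all

theorem swap12_leg23 (X : B ⊗[k] B) : swap12 (leg23 k B X) = leg13 k B X := by
  induction X using TensorProduct.induction_on <;> simp_all [tmul_add]

theorem swap12_leg13 (X : B ⊗[k] B) : swap12 (leg13 k B X) = leg23 k B X := by
  induction X using TensorProduct.induction_on <;> simp_all [tmul_add]

theorem swap23_leg12 (X : B ⊗[k] B) : swap23 (leg12 k B X) = leg13 k B X := by
  induction X using TensorProduct.induction_on <;> simp_all

theorem swap23_leg13 (X : B ⊗[k] B) : swap23 (leg13 k B X) = leg12 k B X := by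
  induction X using TensorProduct.induction_on <;> simp_all

theorem swap23_leg23 (X : B ⊗[k] B) :
    swap23 (leg23 k B X) = leg23 k B (TensorProduct.comm k B B X) := by
  simp

theorem swap12_assoc_tmul (u : B ⊗[k] B) (c : B) :
    swap12 (TensorProduct.assoc k B B B (u ⊗ₜ c)) =
      TensorProduct.assoc k B B B (TensorProduct.comm k B B u ⊗ₜ c) := by
  induction u using TensorProduct.induction_on <;> simp_all [add_tmul]

theorem swap12_swap23_assoc_tmul (u : B ⊗[k] B) (c : B) :
    swap12 (swap23 (TensorProduct.assoc k B B B (u ⊗ₜ c))) = c ⊗ₜ u := by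
  induction u using TensorProduct.induction_on <;> simp_all [add_tmul, tmul_add]

theorem swap23_swap12_tmul (a : B) (X : B ⊗[k] B) :
    swap23 (swap12 (a ⊗ₜ X)) = TensorProduct.assoc k B B B (X ⊗ₜ a) := by
  induction X using TensorProduct.induction_on <;> simp_all [add_tmul, tmul_add]

variable (Δ : B →ₗ[k] B ⊗[k] B)

theorem swap12_ext12 (X : B ⊗[k] B) : swap12 (ext12 k B Δ X) = ext12 k B (comulOp Δ) X := by
  induction X using TensorProduct.induction_on <;> simp_all [ext12_tmul, swap12_assoc_tmul]

theorem swap23_ext23 (X : B ⊗[k] B) : swap23 (ext23 k B Δ X) = ext23 k B (comulOp Δ) X := by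
  induction X using TensorProduct.induction_on <;> simp_all

theorem swap12_swap23_ext12 (X : B ⊗[k] B) :
    swap12 (swap23 (ext12 k B Δ X)) = ext23 k B Δ (TensorProduct.comm k B B X) := by
  induction X using TensorProduct.induction_on <;>
    simp_all [ext12_tmul, swap12_swap23_assoc_tmul]

theorem swap23_swap12_ext23 (X : B ⊗[k] B) :
    swap23 (swap12 (ext23 k B Δ X)) = ext12 k B Δ (TensorProduct.comm k B B X) := by
  induction X using TensorProduct.induction_on <;> simp_all [ext12_tmul, swap23_swap12_tmul]

end Swaps

theorem WeakHopf.comul_one_mul (W : WeakHopf k B) (h : B) : W.Δ 1 * W.Δ h = W.Δ h := by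
  rw [← W.comul_mul, one_mul]

structure IsQuasitriangular (Δ : B →ₗ[k] B ⊗[k] B) (R Rbar : B ⊗[k] B) : Prop where
  eq_mul_mul : R = TensorProduct.comm k B B (Δ 1) * R * Δ 1
  bar_eq_mul_mul : Rbar = Δ 1 * Rbar * TensorProduct.comm k B B (Δ 1)
  mul_bar : R * Rbar = TensorProduct.comm k B B (Δ 1)
  bar_mul : Rbar * R = Δ 1
  comm_comul_mul : ∀ h, TensorProduct.comm k B B (Δ h) * R = R * Δ h
  ext23_eq : ext23 k B Δ R = leg13 k B R * leg12 k B R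
  ext12_eq : ext12 k B Δ R = leg13 k B R * leg23 k B R

namespace IsQuasitriangular

variable {W : WeakHopf k B} {R Rbar : B ⊗[k] B}

theorem comm_comul_one_mul (hR : IsQuasitriangular W.Δ R Rbar) :
    TensorProduct.comm k B B (W.Δ 1) * R = R := by
  rw [hR.eq_mul_mul, ← mul_assoc, ← mul_assoc, ← comm_mul, W.comul_one_mul]

theorem mul_comul_one (hR : IsQuasitriangular W.Δ R Rbar) : R * W.Δ 1 = R := by
  rw [hR.eq_mul_mul, mul_assoc _ (W.Δ 1), W.comul_one_mul]

end IsQuasitriangular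

namespace Twist

variable {W : WeakHopf k B} (T : Twist k B W)

def twistR (R : B ⊗[k] B) : B ⊗[k] B := TensorProduct.comm k B B T.Θbar * R * T.Θ

def twistRbar (Rbar : B ⊗[k] B) : B ⊗[k] B := T.Θbar * Rbar * TensorProduct.comm k B B T.Θ

variable {T} {Δ' : B →ₗ[k] B ⊗[k] B} {R Rbar : B ⊗[k] B}

theorem comul_twisted_one (hΔ' : ∀ h, Δ' h = T.Θbar * W.Δ h * T.Θ) :
    Δ' 1 = T.Θbar * T.Θ := by
  rw [hΔ', mul_assoc, ← T.idem_left]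

theorem twistR_eq_mul_mul (hΔ' : ∀ h, Δ' h = T.Θbar * W.Δ h * T.Θ)
    (hR : IsQuasitriangular W.Δ R Rbar) :
    T.twistR R = TensorProduct.comm k B B (Δ' 1) * T.twistR R * Δ' 1 :=
  calc T.twistR R
      = TensorProduct.comm k B B T.Θbar * (TensorProduct.comm k B B (W.Δ 1) * R * W.Δ 1) *
          T.Θ := by
        rw [← hR.eq_mul_mul, twistR]
    _ = _ := by
        rw [comul_twisted_one hΔ', ← T.prod_eq, comm_mul, comm_mul, twistR]
        simp only [mul_assoc]

theorem twistRbar_eq_mul_mul (hΔ' : ∀ h, Δ' h = T.Θbar * W.Δ h * T.Θ)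
    (hR : IsQuasitriangular W.Δ R Rbar) :
    T.twistRbar Rbar = Δ' 1 * T.twistRbar Rbar * TensorProduct.comm k B B (Δ' 1) :=
  calc T.twistRbar Rbar
      = T.Θbar * (W.Δ 1 * Rbar * TensorProduct.comm k B B (W.Δ 1)) *
          TensorProduct.comm k B B T.Θ := by
        rw [← hR.bar_eq_mul_mul, twistRbar]
    _ = _ := by
        rw [comul_twisted_one hΔ', ← T.prod_eq, comm_mul, comm_mul, twistRbar]
        simp only [mul_assoc]

theorem twistR_mul_twistRbar (hΔ' : ∀ h, Δ' h = T.Θbar * W.Δ h * T.Θ)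
    (hR : IsQuasitriangular W.Δ R Rbar) :
    T.twistR R * T.twistRbar Rbar = TensorProduct.comm k B B (Δ' 1) :=
  calc T.twistR R * T.twistRbar Rbar
      = TensorProduct.comm k B B T.Θbar * (R * (T.Θ * T.Θbar) * Rbar) *
          TensorProduct.comm k B B T.Θ := by
        simp only [twistR, twistRbar, mul_assoc]
    _ = TensorProduct.comm k B B T.Θbar * TensorProduct.comm k B B (W.Δ 1) *
          TensorProduct.comm k B B T.Θ := by
        rw [T.prod_eq, hR.mul_comul_one, hR.mul_bar]
    _ = TensorProduct.comm k B B (Δ' 1) := by rw [hΔ', comm_mul, comm_mul]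

theorem twistRbar_mul_twistR (hΔ' : ∀ h, Δ' h = T.Θbar * W.Δ h * T.Θ)
    (hR : IsQuasitriangular W.Δ R Rbar) :
    T.twistRbar Rbar * T.twistR R = Δ' 1 :=
  calc T.twistRbar Rbar * T.twistR R
      = T.Θbar * (Rbar * (TensorProduct.comm k B B (T.Θ * T.Θbar) * R)) * T.Θ := by
        simp only [twistR, twistRbar, comm_mul, mul_assoc]
    _ = T.Θbar * W.Δ 1 * T.Θ := by
        rw [T.prod_eq, hR.comm_comul_one_mul, hR.bar_mul]
    _ = Δ' 1 := (hΔ' 1).symm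

theorem comm_comul_twisted_mul_twistR (hΔ' : ∀ h, Δ' h = T.Θbar * W.Δ h * T.Θ)
    (hR : IsQuasitriangular W.Δ R Rbar) (h : B) :
    TensorProduct.comm k B B (Δ' h) * T.twistR R = T.twistR R * Δ' h :=
  calc TensorProduct.comm k B B (Δ' h) * T.twistR R
      = TensorProduct.comm k B B T.Θbar * (TensorProduct.comm k B B (W.Δ h) *
          (TensorProduct.comm k B B (T.Θ * T.Θbar) * R)) * T.Θ := by
        simp only [hΔ', twistR, comm_mul, mul_assoc]
    _ = TensorProduct.comm k B B T.Θbar * (R * (T.Θ * T.Θbar * W.Δ h)) * T.Θ := by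
        rw [T.prod_eq, hR.comm_comul_one_mul, hR.comm_comul_mul, W.comul_one_mul]
    _ = T.twistR R * Δ' h := by
        simp only [hΔ', twistR, mul_assoc]

theorem ext23_twistR (hΔ' : ∀ h, Δ' h = T.Θbar * W.Δ h * T.Θ)
    (hR : IsQuasitriangular W.Δ R Rbar) :
    ext23 k B Δ' (T.twistR R) = leg13 k B (T.twistR R) * leg12 k B (T.twistR R) := by
  have cocycle₂' : leg23 k B T.Θbar * ext23 k B W.Δ (TensorProduct.comm k B B T.Θbar) =
      leg13 k B (TensorProduct.comm k B B T.Θbar) *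
        swap12 (ext23 k B (comulOp W.Δ) T.Θbar) := by
    simpa only [map_mul, swap23_leg12, swap12_leg13, swap12_swap23_ext12, swap23_leg23,
      swap12_leg23, swap23_ext23] using congrArg (fun z => swap12 (swap23 z)) T.cocycle₂
  have intertwine : swap12 (ext23 k B (comulOp W.Δ) T.Θbar) * leg13 k B R =
      leg13 k B R * swap12 (ext23 k B W.Δ T.Θbar) := by
    simpa only [map_mul, swap12_leg23] using
      congrArg swap12 (ext23_comulOp_mul_leg23 hR.comm_comul_mul T.Θbar)
  have cocycle₄' : swap12 (ext23 k B W.Δ T.Θbar) * ext12 k B (comulOp W.Δ) T.Θ =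
      leg13 k B T.Θ * leg12 k B (TensorProduct.comm k B B T.Θbar) := by
    simpa only [map_mul, swap12_ext12, swap12_leg23, swap12_leg12] using
      congrArg swap12 T.cocycle₄
  rw [ext23_eq_of_forall_eq_mul_mul hΔ', twistR, ext23_mul W.comul_mul,
    ext23_mul W.comul_mul, hR.ext23_eq, leg13_mul, leg13_mul, leg12_mul, leg12_mul]
  simp only [mul_assoc]
  rw [← T.cocycle₁, mul_mul_eq_of_mul_eq (leg12_mul_ext12 hR.comm_comul_mul T.Θ),
    mul_mul_eq_of_mul_eq cocycle₂', mul_mul_eq_of_mul_eq intertwine,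
    mul_mul_eq_of_mul_eq cocycle₄']

theorem ext12_twistR (hΔ' : ∀ h, Δ' h = T.Θbar * W.Δ h * T.Θ)
    (hR : IsQuasitriangular W.Δ R Rbar) :
    ext12 k B Δ' (T.twistR R) = leg13 k B (T.twistR R) * leg23 k B (T.twistR R) := by
  have cocycle₂' : leg12 k B T.Θbar * ext12 k B W.Δ (TensorProduct.comm k B B T.Θbar) =
      leg13 k B (TensorProduct.comm k B B T.Θbar) *
        swap23 (ext12 k B (comulOp W.Δ) T.Θbar) := by
    simpa only [map_mul, swap12_leg12, swap23_leg12, swap12_ext12, swap12_leg23, swap23_leg13,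
      swap23_swap12_ext23] using (congrArg (fun z => swap23 (swap12 z)) T.cocycle₂).symm
  have intertwine : swap23 (ext12 k B (comulOp W.Δ) T.Θbar) * leg13 k B R =
      leg13 k B R * swap23 (ext12 k B W.Δ T.Θbar) := by
    simpa only [map_mul, swap23_leg12] using
      (congrArg swap23 (leg12_mul_ext12 hR.comm_comul_mul T.Θbar)).symm
  have cocycle₃' : swap23 (ext12 k B W.Δ T.Θbar) * ext23 k B (comulOp W.Δ) T.Θ =
      leg13 k B T.Θ * leg23 k B (TensorProduct.comm k B B T.Θbar) := by
    simpa only [map_mul, swap23_ext23, swap23_leg12, swap23_leg23] using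
      congrArg swap23 T.cocycle₃
  rw [ext12_eq_of_forall_eq_mul_mul hΔ', twistR, ext12_mul W.comul_mul,
    ext12_mul W.comul_mul, hR.ext12_eq, leg13_mul, leg13_mul, leg23_mul, leg23_mul]
  simp only [mul_assoc]
  rw [T.cocycle₁, ← mul_mul_eq_of_mul_eq (ext23_comulOp_mul_leg23 hR.comm_comul_mul T.Θ),
    mul_mul_eq_of_mul_eq cocycle₂', mul_mul_eq_of_mul_eq intertwine,
    mul_mul_eq_of_mul_eq cocycle₃']

end Twist

theorem IsQuasitriangular.twist {W : WeakHopf k B} {R Rbar : B ⊗[k] B}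
    (hR : IsQuasitriangular W.Δ R Rbar) (T : Twist k B W) {Δ' : B →ₗ[k] B ⊗[k] B}
    (hΔ' : ∀ h, Δ' h = T.Θbar * W.Δ h * T.Θ) :
    IsQuasitriangular Δ' (T.twistR R) (T.twistRbar Rbar) where
  eq_mul_mul := Twist.twistR_eq_mul_mul hΔ' hR
  bar_eq_mul_mul := Twist.twistRbar_eq_mul_mul hΔ' hR
  mul_bar := Twist.twistR_mul_twistRbar hΔ' hR
  bar_mul := Twist.twistRbar_mul_twistR hΔ' hR
  comm_comul_mul := Twist.comm_comul_twisted_mul_twistR hΔ' hR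
  ext23_eq := Twist.ext23_twistR hΔ' hR
  ext12_eq := Twist.ext12_twistR hΔ' hR

end WHA

/-- twisting a quasitriangular weak Hopf algebra gives a quasitriangular
weak Hopf algebra, with quasitriangular structure `(Θ̄₂₁ R Θ, Θ̄ R̄ Θ₂₁)`. -/
theorem twisted_quasitriangular
    (k B : Type*) [Field k] [Ring B] [Algebra k B]
    (W : WHA.WeakHopf k B) (T : WHA.Twist k B W)
    (R Rbar : B ⊗[k] B)
    (hR₁ : R = (TensorProduct.comm k B B) (W.Δ 1) * R * W.Δ 1)
    (hR₂ : Rbar = W.Δ 1 * Rbar * (TensorProduct.comm k B B) (W.Δ 1))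
    (hR₃ : R * Rbar = (TensorProduct.comm k B B) (W.Δ 1))
    (hR₄ : Rbar * R = W.Δ 1)
    (hR₅ : ∀ h : B, (TensorProduct.comm k B B) (W.Δ h) * R = R * W.Δ h)
    (hR₆ : WHA.ext23 k B W.Δ R = WHA.leg13 k B R * WHA.leg12 k B R)
    (hR₇ : WHA.ext12 k B W.Δ R = WHA.leg13 k B R * WHA.leg23 k B R)
    (ΔΘ : B →ₗ[k] B ⊗[k] B)
    (hΔΘ : ∀ h : B, ΔΘ h = T.Θbar * W.Δ h * T.Θ)
    (RΘ RbΘ : B ⊗[k] B)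
    (hRΘ : RΘ = (TensorProduct.comm k B B) T.Θbar * R * T.Θ)
    (hRbΘ : RbΘ = T.Θbar * Rbar * (TensorProduct.comm k B B) T.Θ) :
    RΘ = (TensorProduct.comm k B B) (ΔΘ 1) * RΘ * ΔΘ 1 ∧
    RbΘ = ΔΘ 1 * RbΘ * (TensorProduct.comm k B B) (ΔΘ 1) ∧
    RΘ * RbΘ = (TensorProduct.comm k B B) (ΔΘ 1) ∧
    RbΘ * RΘ = ΔΘ 1 ∧
    (∀ h : B, (TensorProduct.comm k B B) (ΔΘ h) * RΘ = RΘ * ΔΘ h) ∧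
    WHA.ext23 k B ΔΘ RΘ = WHA.leg13 k B RΘ * WHA.leg12 k B RΘ ∧
    WHA.ext12 k B ΔΘ RΘ = WHA.leg13 k B RΘ * WHA.leg23 k B RΘ := by
  subst hRΘ hRbΘ
  obtain ⟨h₁, h₂, h₃, h₄, h₅, h₆, h₇⟩ :=
    WHA.IsQuasitriangular.twist ⟨hR₁, hR₂, hR₃, hR₄, hR₅, hR₆, hR₇⟩ T hΔΘ
  exact ⟨h₁, h₂, h₃, h₄, h₅, h₆, h₇⟩
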